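/- Let A : ℝ → Matrix (Fin n) (Fin n) ℝ be a continuous family of real n × n matrices, and let λ : ℝ → ℂ be continuous on [0, 1] such that for every t ∈ [0, 1], λ(t) is a simple eigenvalue of A(t) (a root of multiplicity one of the characteristic polynomial of A(t) over ℂ). If λ(0) is real, then λ(t) is real for every t ∈ [0, 1]; in particular λ(1) is real. -/

import Mathlib

open Polynomial

/-!
Let `p_t` be the characteristic polynomial of `A t` and `D(t)` the divided difference
`(p_t(λ t) - p_t(conj (λ t))) / (λ t - conj (λ t))`, written as a polynomial expression in both
arguments so that it is continuous in `t` and equals `p_t'(λ t)` when `λ t` is real.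
If `λ t` is real, `D(t) = p_t'(λ t) ≠ 0` because the root is simple. If not, `conj (λ t)` is a
second root of the real polynomial `p_t`, so `D(t) = 0`. Hence the set of `t` with `λ t` real is
`{D ≠ 0}`, relatively open, as well as `{Im (λ t) = 0}`, relatively closed; it contains `0`, so by
connectedness it is all of `[0, 1]`.
-/

theorem IsPreconnected.forall_eq_zero_of_eq_zero_iff_ne_zero {X Y Z : Type*}
    [TopologicalSpace X] [TopologicalSpace Y] [TopologicalSpace Z] [Zero Y] [Zero Z]
    [T1Space Y] [T1Space Z] {s : Set X} (hs : IsPreconnected s) {f : X → Y} {g : X → Z}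
    (hf : ContinuousOn f s) (hg : ContinuousOn g s) (hfg : ∀ x ∈ s, f x = 0 ↔ g x ≠ 0)
    {a : X} (ha : a ∈ s) (hfa : f a = 0) : ∀ x ∈ s, f x = 0 := by
  have : PreconnectedSpace s := Subtype.preconnectedSpace hs
  have hclosed : IsClosed {x : s | f x = 0} := isClosed_singleton.preimage hf.domRestrict
  have hopen : IsOpen {x : s | f x = 0} := by
    have : {x : s | f x = 0} = s.domRestrict g ⁻¹' {0}ᶜ := Set.ext fun x => hfg x x.2
    exact this ▸ isOpen_compl_singleton.preimage hg.domRestrict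
  have huniv := IsClopen.eq_univ ⟨hclosed, hopen⟩ ⟨⟨a, ha⟩, hfa⟩
  exact fun x hx => (Set.eq_univ_iff_forall.1 huniv ⟨x, hx⟩ :)

theorem Matrix.continuous_charpoly_coeff {X n R : Type*} [TopologicalSpace X] [Fintype n]
    [DecidableEq n] [CommRing R] [TopologicalSpace R] [IsTopologicalRing R]
    {M : X → Matrix n n R} (hM : Continuous M) (i : ℕ) :
    Continuous fun x => (M x).charpoly.coeff i := by
  have h : ∀ x, (M x).charpoly.coeff i =
      MvPolynomial.eval (fun ij : n × n => M x ij.1 ij.2) ((charpoly.univ R n).coeff i) :=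
    fun x => by rw [MvPolynomial.eval, charpoly.univ_coeff_eval₂Hom]; rfl
  simp_rw [h]
  exact (MvPolynomial.continuous_eval _).comp (continuous_pi fun ij => hM.matrix_elem ij.1 ij.2)

namespace Polynomial

variable {R : Type*} [CommRing R]

/-- The divided difference `(p(x) - p(y)) / (x - y)`, as a polynomial expression in `x` and `y`
that is defined on the diagonal too. -/
noncomputable def divDiff (p : R[X]) (x y : R) : R :=
  p.sum fun i a => a * ∑ k ∈ Finset.range i, x ^ k * y ^ (i - 1 - k)

theorem sub_mul_divDiff (p : R[X]) (x y : R) :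
    (x - y) * p.divDiff x y = p.eval x - p.eval y := by
  simp only [divDiff, eval_eq_sum, Polynomial.sum_def, ← Finset.sum_sub_distrib]
  rw [Finset.mul_sum]
  refine Finset.sum_congr rfl fun i _ => ?_
  rw [mul_left_comm, (Commute.all x y).mul_geom_sum₂, mul_sub]

theorem divDiff_self (p : R[X]) (x : R) : p.divDiff x x = p.derivative.eval x := by
  simp only [divDiff, derivative_eval, geom_sum₂_self, mul_assoc]

theorem continuous_divDiff {X : Type*} [TopologicalSpace X] [TopologicalSpace R]
    [IsTopologicalRing R] {P : X → R[X]} {N : ℕ} (hdeg : ∀ x, (P x).natDegree ≤ N)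
    (hcoeff : ∀ i, Continuous fun x => (P x).coeff i) :
    Continuous fun q : X × R × R => (P q.1).divDiff q.2.1 q.2.2 := by
  have h : ∀ q : X × R × R, (P q.1).divDiff q.2.1 q.2.2 = ∑ i ∈ Finset.range (N + 1),
      (P q.1).coeff i * ∑ k ∈ Finset.range i, q.2.1 ^ k * q.2.2 ^ (i - 1 - k) :=
    fun q => sum_over_range' _ (fun _ => zero_mul _) _ (Nat.lt_succ_of_le (hdeg q.1))
  simp_rw [h]
  have hc : ∀ i, Continuous fun q : X × R × R => (P q.1).coeff i :=
    fun i => (hcoeff i).comp continuous_fst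
  fun_prop

theorem im_eq_zero_iff_divDiff_conj_ne_zero {q : ℝ[X]} {z : ℂ}
    (hz : (q.map (algebraMap ℝ ℂ)).rootMultiplicity z = 1) :
    z.im = 0 ↔ (q.map (algebraMap ℝ ℂ)).divDiff z (starRingEnd ℂ z) ≠ 0 := by
  set p := q.map (algebraMap ℝ ℂ)
  have hp : p ≠ 0 := fun h => by simp [h] at hz
  have hroot : p.IsRoot z := (rootMultiplicity_pos hp).1 (by omega)
  constructor
  · intro him hder
    rw [Complex.conj_eq_iff_im.2 him, divDiff_self] at hder
    have := (one_lt_rootMultiplicity_iff_isRoot hp).2 ⟨hroot, hder⟩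
    omega
  · intro hne
    by_contra him
    have hconj : p.IsRoot (starRingEnd ℂ z) := by
      rw [IsRoot, eval_map_algebraMap] at hroot ⊢
      rw [aeval_conj, hroot, map_zero]
    have h := sub_mul_divDiff p z (starRingEnd ℂ z)
    rw [hroot.eq_zero, hconj.eq_zero, sub_zero, mul_eq_zero, sub_eq_zero] at h
    rcases h with h | h
    exacts [him (Complex.conj_eq_iff_im.1 h.symm), hne h]

end Polynomial

/-- Scenario (a) of Section 3.1: along a continuous family of real matrices on `[0, 1]`,
a continuous eigenvalue branch that stays simple and starts real remains real. -/
theorem simple_eigenvalue_branch_stays_real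
    (n : ℕ) (A : ℝ → Matrix (Fin n) (Fin n) ℝ)
    (hA : ∀ i j, Continuous fun t => A t i j)
    (lam : ℝ → ℂ) (hcont : ContinuousOn lam (Set.Icc 0 1))
    (hsimple : ∀ t ∈ Set.Icc (0 : ℝ) 1,
      (((A t).map (Complex.ofReal)).charpoly).rootMultiplicity (lam t) = 1)
    (h0 : (lam 0).im = 0) :
    ∀ t ∈ Set.Icc (0 : ℝ) 1, (lam t).im = 0 := by
  have hP : ∀ t, ((A t).map Complex.ofReal).charpoly = (A t).charpoly.map (algebraMap ℝ ℂ) :=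
    fun t => Matrix.charpoly_map (A t) Complex.ofRealHom
  have hdeg : ∀ t, ((A t).map Complex.ofReal).charpoly.natDegree ≤ n := fun t => by
    rw [Matrix.charpoly_natDegree_eq_dim, Fintype.card_fin]
  have hcoeff := Matrix.continuous_charpoly_coeff
    ((continuous_matrix hA).matrix_map Complex.continuous_ofReal)
  have hpath : ContinuousOn (fun t => (t, lam t, starRingEnd ℂ (lam t))) (Set.Icc 0 1) :=
    continuousOn_id.prodMk (hcont.prodMk (Complex.continuous_conj.comp_continuousOn hcont))
  refine isPreconnected_Icc.forall_eq_zero_of_eq_zero_iff_ne_zero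
    (Complex.continuous_im.comp_continuousOn hcont)
    ((continuous_divDiff hdeg hcoeff).comp_continuousOn hpath) (fun t ht => ?_)
    (Set.left_mem_Icc.2 zero_le_one) h0
  have h := hsimple t ht
  rw [hP] at h
  rw [Function.comp_apply, hP]
  exact im_eq_zero_iff_divDiff_conj_ne_zero h
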